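/- arXiv:2408.05306 — 2 statements merged into one kernel-verified Lean document; each statement's English description precedes it below -/
import Mathlib

section
/- For complex numbers a, b, s with Re(s) > 1, Re(s - a) > 1, Re(s - b) > 1, and Re(s - a - b) > 1, the Dirichlet series ∑_{n≥1} σ_a(n)·σ_b(n)/n^s equals ζ(s)·ζ(s-a)·ζ(s-b)·ζ(s-a-b)/ζ(2s-a-b). -/
open Complex

/-! ### Auxiliary development for Ramanujan's identity -/

noncomputable def zf (w : ℂ) (n : ℕ+) : ℂ := 1 / ((n : ℕ) : ℂ) ^ w

lemma pnat_cast_ne_zero (n : ℕ+) : ((n : ℕ) : ℂ) ≠ 0 :=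
  Nat.cast_ne_zero.mpr n.pos.ne'

lemma hasSum_zeta_pnat {w : ℂ} (hw : 1 < w.re) :
    HasSum (zf w) (riemannZeta w) := by
  have hs : Summable (fun n : ℕ => 1 / (n:ℂ) ^ w) := Complex.summable_one_div_nat_cpow.mpr hw
  have hw0 : w ≠ 0 := fun h => by rw [h] at hw; norm_num at hw
  have h0 : ∀ n ∉ Set.range ((↑) : ℕ+ → ℕ), 1 / (n:ℂ) ^ w = 0 := by
    intro n hn
    have hn0 : n = 0 := by
      by_contra h
      exact hn ⟨⟨n, Nat.pos_of_ne_zero h⟩, rfl⟩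
    subst hn0
    rw [Nat.cast_zero, Complex.zero_cpow hw0, div_zero]
  exact (Function.Injective.hasSum_iff (f := fun n : ℕ => 1/(n:ℂ)^w)
    (fun m n h => PNat.coe_injective h) h0).mpr
    ((zeta_eq_tsum_one_div_nat_cpow hw) ▸ hs.hasSum)

lemma summable_norm_zf {w : ℂ} (hw : 1 < w.re) :
    Summable (fun n : ℕ+ => ‖zf w n‖) := by
  have h : Summable (fun n : ℕ => 1 / (n:ℝ) ^ w.re) := Real.summable_one_div_nat_rpow.mpr hw
  have := h.comp_injective (fun m n h => PNat.coe_injective h : Function.Injective ((↑) : ℕ+ → ℕ))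
  refine this.congr fun n => ?_
  simp only [Function.comp, zf, norm_div, norm_one, Complex.norm_natCast_cpow_of_pos n.pos]

lemma tsum_zf_eq {w : ℂ} (hw : 1 < w.re) : ∑' n : ℕ+, zf w n = riemannZeta w :=
  (hasSum_zeta_pnat hw).tsum_eq

lemma zf_mul (w : ℂ) (m n : ℕ+) : zf w (m * n) = zf w m * zf w n := by
  unfold zf
  rw [div_mul_div_comm, one_mul, PNat.mul_coe, Nat.cast_mul, Complex.natCast_mul_natCast_cpow]

lemma zf_add (u v : ℂ) (n : ℕ+) : zf (u + v) n = zf u n * zf v n := by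
  unfold zf
  rw [div_mul_div_comm, one_mul, Complex.cpow_add _ _ (pnat_cast_ne_zero n)]

abbrev CP := {p : ℕ+ × ℕ+ // Nat.Coprime (p.1 : ℕ) (p.2 : ℕ)}

lemma split_unique {g y z g' y' z' : ℕ+} (hc : Nat.Coprime (y:ℕ) (z:ℕ))
    (hc' : Nat.Coprime (y':ℕ) (z':ℕ)) (h1 : g * y = g' * y') (h2 : g * z = g' * z') :
    g = g' ∧ y = y' ∧ z = z' := by
  have hg : (g : ℕ) = (g' : ℕ) := by
    calc (g:ℕ) = Nat.gcd ((g:ℕ)*(y:ℕ)) ((g:ℕ)*(z:ℕ)) := by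
          rw [Nat.gcd_mul_left, hc, mul_one]
      _ = Nat.gcd ((g':ℕ)*(y':ℕ)) ((g':ℕ)*(z':ℕ)) := by
          rw [← PNat.mul_coe, ← PNat.mul_coe, h1, h2, PNat.mul_coe, PNat.mul_coe]
      _ = (g':ℕ) := by rw [Nat.gcd_mul_left, hc', mul_one]
  have hgg : g = g' := PNat.coe_injective hg
  subst hgg
  exact ⟨rfl, mul_left_cancel h1, mul_left_cancel h2⟩

lemma split_exists (d e : ℕ+) : ∃ g y z : ℕ+,
    Nat.Coprime (y:ℕ) (z:ℕ) ∧ g * y = d ∧ g * z = e ∧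
    ((g:ℕ) * (y:ℕ) * (z:ℕ) = Nat.lcm (d:ℕ) (e:ℕ)) := by
  set G : ℕ := Nat.gcd (d:ℕ) (e:ℕ) with hG
  have hGpos : 0 < G := Nat.gcd_pos_of_pos_left _ d.pos
  have hdy : G * ((d:ℕ) / G) = (d:ℕ) := Nat.mul_div_cancel' (Nat.gcd_dvd_left _ _)
  have hez : G * ((e:ℕ) / G) = (e:ℕ) := Nat.mul_div_cancel' (Nat.gcd_dvd_right _ _)
  have hypos : 0 < (d:ℕ) / G := Nat.div_pos (Nat.le_of_dvd d.pos (Nat.gcd_dvd_left _ _)) hGpos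
  have hzpos : 0 < (e:ℕ) / G := Nat.div_pos (Nat.le_of_dvd e.pos (Nat.gcd_dvd_right _ _)) hGpos
  refine ⟨⟨G, hGpos⟩, ⟨_, hypos⟩, ⟨_, hzpos⟩, Nat.coprime_div_gcd_div_gcd hGpos, ?_, ?_, ?_⟩
  · exact PNat.coe_injective hdy
  · exact PNat.coe_injective hez
  · have h1 : (d:ℕ) * (e:ℕ) = (G * ((d:ℕ)/G) * ((e:ℕ)/G)) * G := by
      conv_lhs => rw [← hdy, ← hez]
      ring
    have h2 : Nat.lcm (d:ℕ) (e:ℕ) = (d:ℕ) * (e:ℕ) / G := rfl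
    show G * ((d:ℕ)/G) * ((e:ℕ)/G) = _
    rw [h2, h1, Nat.mul_div_cancel _ hGpos]

/-- the "unfolding" map `(g, (y,z)) ↦ (g*y, g*z)`. -/
def pack : ℕ+ × CP → ℕ+ × ℕ+ := fun x => (x.1 * x.2.1.1, x.1 * x.2.1.2)

lemma pack_bijective : Function.Bijective pack := by
  constructor
  · rintro ⟨g, ⟨⟨y, z⟩, hc⟩⟩ ⟨g', ⟨⟨y', z'⟩, hc'⟩⟩ h
    have h1 : g * y = g' * y' := congrArg Prod.fst h
    have h2 : g * z = g' * z' := congrArg Prod.snd h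
    obtain ⟨hg, hy, hz⟩ := split_unique hc hc' h1 h2
    subst hg; subst hy; subst hz; rfl
  · rintro ⟨d, e⟩
    obtain ⟨g, y, z, hc, hd, he, -⟩ := split_exists d e
    exact ⟨⟨g, ⟨⟨y, z⟩, hc⟩⟩, by simp [pack, hd, he]⟩

noncomputable def packEquiv : ℕ+ × CP ≃ ℕ+ × ℕ+ := Equiv.ofBijective pack pack_bijective

lemma summable_norm_cp {u v : ℂ} (hu : 1 < u.re) (hv : 1 < v.re) :
    Summable (fun p : CP => ‖zf u p.1.1 * zf v p.1.2‖) := by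
  have h : Summable (fun x : ℕ+ × ℕ+ => ‖zf u x.1 * zf v x.2‖) :=
    (summable_norm_zf hu).mul_norm (summable_norm_zf hv)
  exact h.comp_injective Subtype.val_injective

/-- the coprime-pair zeta sum -/
noncomputable def cpSum (u v : ℂ) : ℂ := ∑' p : CP, zf u p.1.1 * zf v p.1.2

lemma zf_pack (u v : ℂ) (x : ℕ+ × CP) :
    zf u (pack x).1 * zf v (pack x).2 =
      zf (u + v) x.1 * (zf u x.2.1.1 * zf v x.2.1.2) := by
  obtain ⟨g, ⟨⟨y, z⟩, hc⟩⟩ := x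
  show zf u (g * y) * zf v (g * z) = _
  rw [zf_mul, zf_mul, zf_add]
  ring

lemma zeta_mul_zeta {u v : ℂ} (hu : 1 < u.re) (hv : 1 < v.re) :
    riemannZeta u * riemannZeta v = riemannZeta (u + v) * cpSum u v := by
  have huv : 1 < (u + v).re := by simp only [add_re]; linarith
  have h1 : riemannZeta u * riemannZeta v = ∑' x : ℕ+ × ℕ+, zf u x.1 * zf v x.2 := by
    rw [← tsum_zf_eq hu, ← tsum_zf_eq hv]
    exact tsum_mul_tsum_of_summable_norm (summable_norm_zf hu) (summable_norm_zf hv)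
  have h2 : ∑' x : ℕ+ × ℕ+, zf u x.1 * zf v x.2
      = ∑' y : ℕ+ × CP, (zf u (pack y).1 * zf v (pack y).2) :=
    (packEquiv.tsum_eq (fun x : ℕ+ × ℕ+ => zf u x.1 * zf v x.2)).symm
  have h3 : ∑' y : ℕ+ × CP, (zf u (pack y).1 * zf v (pack y).2)
      = ∑' y : ℕ+ × CP, zf (u + v) y.1 * (zf u y.2.1.1 * zf v y.2.1.2) :=
    tsum_congr fun y => zf_pack u v y
  have h4 : ∑' y : ℕ+ × CP, zf (u + v) y.1 * (zf u y.2.1.1 * zf v y.2.1.2)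
      = riemannZeta (u + v) * cpSum u v := by
    rw [cpSum, ← tsum_zf_eq huv]
    exact (tsum_mul_tsum_of_summable_norm (summable_norm_zf huv)
      (summable_norm_cp hu hv)).symm
  rw [h1, h2, h3, h4]

/-- the weight function on the structured index set -/
noncomputable def W (a b s : ℂ) (x : ℕ+ × (ℕ+ × CP)) : ℂ :=
  zf s x.1 * (zf (s - a - b) x.2.1 * (zf (s - a) x.2.2.1.1 * zf (s - b) x.2.2.1.2))

/-- the projection to `n = m*g*y*z` -/
def projN (x : ℕ+ × (ℕ+ × CP)) : ℕ+ := x.1 * x.2.1 * x.2.2.1.1 * x.2.2.1.2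

lemma W_eq (a b s : ℂ) (m g y z : ℕ+) :
    zf s m * (zf (s-a-b) g * (zf (s-a) y * zf (s-b) z))
      = (((g*y : ℕ+) : ℕ) : ℂ) ^ a * (((g*z : ℕ+) : ℕ) : ℂ) ^ b
        / (((m*g*y*z : ℕ+) : ℕ) : ℂ) ^ s := by
  have hM := pnat_cast_ne_zero m
  have hG := pnat_cast_ne_zero g
  have hY := pnat_cast_ne_zero y
  have hZ := pnat_cast_ne_zero z
  set M : ℂ := ((m:ℕ):ℂ)
  set G : ℂ := ((g:ℕ):ℂ)
  set Y : ℂ := ((y:ℕ):ℂ)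
  set Z : ℂ := ((z:ℕ):ℂ)
  have e1 : (((g*y : ℕ+) : ℕ) : ℂ) ^ a = G ^ a * Y ^ a := by
    rw [PNat.mul_coe, Nat.cast_mul, Complex.natCast_mul_natCast_cpow]
  have e2 : (((g*z : ℕ+) : ℕ) : ℂ) ^ b = G ^ b * Z ^ b := by
    rw [PNat.mul_coe, Nat.cast_mul, Complex.natCast_mul_natCast_cpow]
  have e3 : (((m*g*y*z : ℕ+) : ℕ) : ℂ) ^ s = M ^ s * G ^ s * Y ^ s * Z ^ s := by
    rw [PNat.mul_coe, Nat.cast_mul, Complex.natCast_mul_natCast_cpow,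
      PNat.mul_coe, Nat.cast_mul, Complex.natCast_mul_natCast_cpow,
      PNat.mul_coe, Nat.cast_mul, Complex.natCast_mul_natCast_cpow]
  rw [e1, e2, e3]
  unfold zf
  rw [Complex.cpow_sub _ b hG, Complex.cpow_sub _ a hG,
      Complex.cpow_sub _ a hY, Complex.cpow_sub _ b hZ]
  have hMs : M ^ s ≠ 0 := fun h => hM ((Complex.cpow_eq_zero_iff _ _).mp h).1
  have hGs : G ^ s ≠ 0 := fun h => hG ((Complex.cpow_eq_zero_iff _ _).mp h).1
  have hYs : Y ^ s ≠ 0 := fun h => hY ((Complex.cpow_eq_zero_iff _ _).mp h).1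
  have hZs : Z ^ s ≠ 0 := fun h => hZ ((Complex.cpow_eq_zero_iff _ _).mp h).1
  have hGa : G ^ a ≠ 0 := fun h => hG ((Complex.cpow_eq_zero_iff _ _).mp h).1
  have hGb : G ^ b ≠ 0 := fun h => hG ((Complex.cpow_eq_zero_iff _ _).mp h).1
  have hYa : Y ^ a ≠ 0 := fun h => hY ((Complex.cpow_eq_zero_iff _ _).mp h).1
  have hZb : Z ^ b ≠ 0 := fun h => hZ ((Complex.cpow_eq_zero_iff _ _).mp h).1
  field_simp
  ring

/-- Divisor sum function with complex exponent: `σ_v(n) = ∑_{d ∣ n} d^v`. -/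
noncomputable def csigma (v : ℂ) (n : ℕ) : ℂ := ∑ d ∈ n.divisors, (d : ℂ) ^ v

lemma tsum_fiber (a b s : ℂ) (n : ℕ+) :
    ∑' x : {x : ℕ+ × (ℕ+ × CP) // projN x = n}, W a b s x.val
      = csigma a n * csigma b n / ((n:ℕ):ℂ) ^ s := by
  classical
  set D : Finset (ℕ × ℕ) := (n:ℕ).divisors ×ˢ (n:ℕ).divisors with hD
  have hmem : ∀ x : {x : ℕ+ × (ℕ+ × CP) // projN x = n},
      (((x.val.2.1 * x.val.2.2.1.1 : ℕ+) : ℕ), ((x.val.2.1 * x.val.2.2.1.2 : ℕ+) : ℕ)) ∈ D := by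
    rintro ⟨⟨m, g, ⟨⟨y, z⟩, hc⟩⟩, hx⟩
    have hx' : (m:ℕ) * g * y * z = (n:ℕ) := by
      rw [← hx]; rfl
    simp only [hD, Finset.mem_product, Nat.mem_divisors]
    refine ⟨⟨⟨(m:ℕ)*(z:ℕ), ?_⟩, n.pos.ne'⟩, ⟨⟨(m:ℕ)*(y:ℕ), ?_⟩, n.pos.ne'⟩⟩
    · rw [← hx']; push_cast; ring
    · rw [← hx']; push_cast; ring
  let dmap : {x : ℕ+ × (ℕ+ × CP) // projN x = n} → {p : ℕ × ℕ // p ∈ D} :=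
    fun x => ⟨_, hmem x⟩
  have hbij : Function.Bijective dmap := by
    constructor
    · rintro ⟨⟨m, g, ⟨⟨y, z⟩, hc⟩⟩, hx⟩ ⟨⟨m', g', ⟨⟨y', z'⟩, hc'⟩⟩, hx'⟩ h
      have h' := Subtype.ext_iff.mp h
      have e1 : g * y = g' * y' := PNat.coe_injective (congrArg Prod.fst h')
      have e2 : g * z = g' * z' := PNat.coe_injective (congrArg Prod.snd h')
      obtain ⟨hg, hy, hz⟩ := split_unique hc hc' e1 e2
      subst hg; subst hy; subst hz
      have hm : m = m' := by
        have := hx.trans hx'.symm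
        simpa only [projN, mul_left_inj] using this
      subst hm; rfl
    · rintro ⟨⟨d₀, e₀⟩, hq⟩
      simp only [hD, Finset.mem_product, Nat.mem_divisors] at hq
      obtain ⟨⟨hd, -⟩, ⟨he, -⟩⟩ := hq
      have hd0 : 0 < d₀ := Nat.pos_of_dvd_of_pos hd n.pos
      have he0 : 0 < e₀ := Nat.pos_of_dvd_of_pos he n.pos
      obtain ⟨g, y, z, hc, hgy, hgz, hlcm⟩ := split_exists ⟨d₀, hd0⟩ ⟨e₀, he0⟩
      have hLn : ((g*y*z : ℕ+) : ℕ) ∣ (n:ℕ) := by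
        have : ((g*y*z : ℕ+) : ℕ) = Nat.lcm d₀ e₀ := by
          rw [PNat.mul_coe, PNat.mul_coe]; exact hlcm
        rw [this]
        exact Nat.lcm_dvd hd he
      obtain ⟨m, hm⟩ := PNat.dvd_iff.mpr hLn
      refine ⟨⟨⟨m, g, ⟨⟨y, z⟩, hc⟩⟩, ?_⟩, ?_⟩
      · show m * g * y * z = n
        rw [hm]; ring
      · apply Subtype.ext
        show (((g*y : ℕ+) : ℕ), ((g*z : ℕ+) : ℕ)) = (d₀, e₀)
        rw [hgy, hgz]
        rfl
  let E := Equiv.ofBijective dmap hbij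
  have key : ∀ x : {x : ℕ+ × (ℕ+ × CP) // projN x = n},
      W a b s x.val = (((E x).val.1 : ℂ) ^ a * ((E x).val.2 : ℂ) ^ b / ((n:ℕ):ℂ) ^ s) := by
    rintro ⟨⟨m, g, ⟨⟨y, z⟩, hc⟩⟩, hx⟩
    show zf s m * (zf (s-a-b) g * (zf (s-a) y * zf (s-b) z)) = _
    rw [W_eq a b s m g y z]
    have hn : (m*g*y*z : ℕ+) = n := hx
    rw [hn]
    rfl
  calc ∑' x : {x : ℕ+ × (ℕ+ × CP) // projN x = n}, W a b s x.val
      = ∑' x : {x : ℕ+ × (ℕ+ × CP) // projN x = n},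
          (((E x).val.1 : ℂ) ^ a * ((E x).val.2 : ℂ) ^ b / ((n:ℕ):ℂ) ^ s) :=
        tsum_congr key
    _ = ∑' q : {p : ℕ × ℕ // p ∈ D}, ((q.val.1 : ℂ) ^ a * (q.val.2 : ℂ) ^ b / ((n:ℕ):ℂ) ^ s) :=
        E.tsum_eq (fun q : {p : ℕ × ℕ // p ∈ D} =>
          ((q.val.1 : ℂ) ^ a * (q.val.2 : ℂ) ^ b / ((n:ℕ):ℂ) ^ s))
    _ = ∑ p ∈ D, ((p.1 : ℂ) ^ a * (p.2 : ℂ) ^ b / ((n:ℕ):ℂ) ^ s) :=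
        Finset.tsum_subtype D (fun p => ((p.1 : ℂ) ^ a * (p.2 : ℂ) ^ b / ((n:ℕ):ℂ) ^ s))
    _ = csigma a n * csigma b n / ((n:ℕ):ℂ) ^ s := by
        rw [csigma, csigma, Finset.sum_mul_sum, Finset.sum_div, hD, Finset.sum_product]
        simp_rw [Finset.sum_div]

set_option maxHeartbeats 1000000 in
theorem ramanujan_identity (a b s : ℂ) (h1 : 1 < s.re) (h2 : 1 < (s - a).re)
    (h3 : 1 < (s - b).re) (h4 : 1 < (s - a - b).re) :
    ∑' n : ℕ+, csigma a n * csigma b n / ((n : ℕ) : ℂ) ^ s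
      = riemannZeta s * riemannZeta (s - a) * riemannZeta (s - b) * riemannZeta (s - a - b)
        / riemannZeta (2 * s - a - b) := by
  have h2s : 1 < (2 * s - a - b).re := by
    have e : (2 * s - a - b) = s + (s - a - b) := by ring
    rw [e, add_re]; linarith
  have hcpn : Summable (fun p : CP => ‖zf (s-a) p.1.1 * zf (s-b) p.1.2‖) :=
    summable_norm_cp h2 h3
  have hinn := Summable.mul_norm (f := zf (s-a-b))
    (g := fun p : CP => zf (s-a) p.1.1 * zf (s-b) p.1.2) (summable_norm_zf h4) hcpn
  have hWn := Summable.mul_norm (f := zf s)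
    (g := fun t : ℕ+ × CP => zf (s-a-b) t.1 * (zf (s-a) t.2.1.1 * zf (s-b) t.2.1.2))
    (summable_norm_zf h1) hinn
  have hW : Summable (W a b s) := hWn.of_norm
  have hsig : Summable (fun σ : Σ n : ℕ+, {x : ℕ+ × (ℕ+ × CP) // projN x = n} =>
      W a b s σ.2.val) := ((Equiv.sigmaFiberEquiv projN).summable_iff).mpr hW
  have hfib : ∀ n : ℕ+, Summable (fun c : {x : ℕ+ × (ℕ+ × CP) // projN x = n} =>
      W a b s c.val) := fun n => hW.comp_injective Subtype.val_injective
  have step1 : (∑' n : ℕ+, csigma a n * csigma b n / ((n : ℕ) : ℂ) ^ s)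
      = ∑' x : ℕ+ × (ℕ+ × CP), W a b s x := by
    calc (∑' n : ℕ+, csigma a n * csigma b n / ((n : ℕ) : ℂ) ^ s)
        = ∑' (n : ℕ+) (x : {x : ℕ+ × (ℕ+ × CP) // projN x = n}), W a b s x.val :=
          tsum_congr fun n => (tsum_fiber a b s n).symm
      _ = ∑' σ : Σ n : ℕ+, {x : ℕ+ × (ℕ+ × CP) // projN x = n}, W a b s σ.2.val :=
          (Summable.tsum_sigma' hfib hsig).symm
      _ = ∑' x : ℕ+ × (ℕ+ × CP), W a b s x :=
          (Equiv.sigmaFiberEquiv projN).tsum_eq (W a b s)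
  have inner : ∑' t : ℕ+ × CP, (zf (s-a-b) t.1 * (zf (s-a) t.2.1.1 * zf (s-b) t.2.1.2))
      = riemannZeta (s-a-b) * cpSum (s-a) (s-b) := by
    rw [cpSum, ← tsum_zf_eq h4]
    exact (tsum_mul_tsum_of_summable_norm (f := zf (s-a-b))
      (g := fun p : CP => zf (s-a) p.1.1 * zf (s-b) p.1.2)
      (summable_norm_zf h4) hcpn).symm
  have step2 : ∑' x : ℕ+ × (ℕ+ × CP), W a b s x
      = riemannZeta s * (riemannZeta (s-a-b) * cpSum (s-a) (s-b)) := by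
    rw [← inner, ← tsum_zf_eq h1]
    exact (tsum_mul_tsum_of_summable_norm (f := zf s)
      (g := fun t : ℕ+ × CP => zf (s-a-b) t.1 * (zf (s-a) t.2.1.1 * zf (s-b) t.2.1.2))
      (summable_norm_zf h1) hinn).symm
  have hz2 : riemannZeta (2*s - a - b) ≠ 0 := riemannZeta_ne_zero_of_one_lt_re h2s
  have step3 : riemannZeta (s-a) * riemannZeta (s-b)
      = riemannZeta (2*s-a-b) * cpSum (s-a) (s-b) := by
    have h := zeta_mul_zeta h2 h3
    rwa [show (s-a) + (s-b) = 2*s - a - b by ring] at h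
  rw [step1, step2, eq_div_iff hz2]
  linear_combination (-(riemannZeta s * riemannZeta (s-a-b))) * step3
end

section
/- For a positive integer k and complex α₁, α₂, the following Gamma function identity holds: Γ(k-α₁)/Γ(1-k+α₂) - Γ(k-α₂)/Γ(1-k+α₁) = (2(-1)^k/π)·Γ(k-α₁)·Γ(k-α₂)·sin(π(α₁-α₂)/2)·cos(π(α₁+α₂)/2). -/
open Complex Real

lemma complex_cos_nat_mul_pi (n : ℕ) :
    Complex.cos ((n : ℂ) * (Real.pi : ℂ)) = (-1) ^ n := by
  induction n with
  | zero => simp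
  | succ m ih =>
    push_cast
    rw [add_mul, one_mul, Complex.cos_add_pi, ih]
    ring

theorem gamma_difference_identity (k : ℕ) (hk : 1 ≤ k) (α₁ α₂ : ℂ)
    (h1 : ∀ n : ℕ, (k : ℂ) - α₁ ≠ -n)
    (h2 : ∀ n : ℕ, (k : ℂ) - α₂ ≠ -n)
    (h3 : ∀ n : ℕ, 1 - (k : ℂ) + α₁ ≠ -n)
    (h4 : ∀ n : ℕ, 1 - (k : ℂ) + α₂ ≠ -n) :
    Complex.Gamma ((k : ℂ) - α₁) / Complex.Gamma (1 - (k : ℂ) + α₂)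
      - Complex.Gamma ((k : ℂ) - α₂) / Complex.Gamma (1 - (k : ℂ) + α₁)
    = (2 * (-1 : ℂ) ^ k / (Real.pi : ℂ))
        * Complex.Gamma ((k : ℂ) - α₁) * Complex.Gamma ((k : ℂ) - α₂)
        * Complex.sin ((Real.pi : ℂ) * (α₁ - α₂) / 2)
        * Complex.cos ((Real.pi : ℂ) * (α₁ + α₂) / 2) := by
  have hπ : (Real.pi : ℂ) ≠ 0 := by exact_mod_cast Real.pi_ne_zero
  set z₁ : ℂ := (k : ℂ) - α₁ with hz₁
  set z₂ : ℂ := (k : ℂ) - α₂ with hz₂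
  have e₁ : 1 - (k : ℂ) + α₁ = 1 - z₁ := by rw [hz₁]; ring
  have e₂ : 1 - (k : ℂ) + α₂ = 1 - z₂ := by rw [hz₂]; ring
  have G1 : Complex.Gamma z₁ ≠ 0 := Complex.Gamma_ne_zero h1
  have G2 : Complex.Gamma z₂ ≠ 0 := Complex.Gamma_ne_zero h2
  have G3 : Complex.Gamma (1 - z₁) ≠ 0 := by rw [← e₁]; exact Complex.Gamma_ne_zero h3
  have G4 : Complex.Gamma (1 - z₂) ≠ 0 := by rw [← e₂]; exact Complex.Gamma_ne_zero h4
  have refl₁ := Complex.Gamma_mul_Gamma_one_sub z₁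
  have refl₂ := Complex.Gamma_mul_Gamma_one_sub z₂
  have s₁ : Complex.sin ((Real.pi : ℂ) * z₁) ≠ 0 := by
    intro h; rw [h, div_zero] at refl₁; exact mul_ne_zero G1 G3 refl₁
  have s₂ : Complex.sin ((Real.pi : ℂ) * z₂) ≠ 0 := by
    intro h; rw [h, div_zero] at refl₂; exact mul_ne_zero G2 G4 refl₂
  -- express 1/Γ(1-z) = sin(πz)Γ(z)/π
  have f₁ : Complex.Gamma (1 - z₁)
      = (Real.pi : ℂ) / (Complex.sin ((Real.pi : ℂ) * z₁) * Complex.Gamma z₁) := by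
    field_simp at refl₁ ⊢
    linear_combination refl₁
  have f₂ : Complex.Gamma (1 - z₂)
      = (Real.pi : ℂ) / (Complex.sin ((Real.pi : ℂ) * z₂) * Complex.Gamma z₂) := by
    field_simp at refl₂ ⊢
    linear_combination refl₂
  -- compute sin(π z) = -(-1)^k sin(π α)
  have sin₁ : Complex.sin ((Real.pi : ℂ) * z₁)
      = -((-1 : ℂ) ^ k * Complex.sin ((Real.pi : ℂ) * α₁)) := by
    rw [hz₁, mul_sub, Complex.sin_sub, mul_comm ((Real.pi : ℂ)) ((k : ℂ)),
      Complex.sin_nat_mul_pi, complex_cos_nat_mul_pi]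
    ring
  have sin₂ : Complex.sin ((Real.pi : ℂ) * z₂)
      = -((-1 : ℂ) ^ k * Complex.sin ((Real.pi : ℂ) * α₂)) := by
    rw [hz₂, mul_sub, Complex.sin_sub, mul_comm ((Real.pi : ℂ)) ((k : ℂ)),
      Complex.sin_nat_mul_pi, complex_cos_nat_mul_pi]
    ring
  have prod : Complex.sin ((Real.pi : ℂ) * α₁) - Complex.sin ((Real.pi : ℂ) * α₂)
      = 2 * Complex.sin ((Real.pi : ℂ) * (α₁ - α₂) / 2)
        * Complex.cos ((Real.pi : ℂ) * (α₁ + α₂) / 2) := by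
    rw [Complex.sin_sub_sin]
    ring_nf
  rw [e₁, e₂, f₁, f₂, div_div_eq_mul_div, div_div_eq_mul_div, sin₁, sin₂]
  linear_combination ((-1 : ℂ) ^ k * Complex.Gamma z₁ * Complex.Gamma z₂ / (Real.pi : ℂ)) * prod
end
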